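/- Let L be a finite-dimensional anticommutative algebra over a field F of characteristic zero and let r = Σᵢ aᵢ⊗bᵢ ∈ L⊗L be a solution of the classical Yang–Baxter equation. Equip L* with the multiplication (fg)(c) = Σᵢ f(aᵢc)g(bᵢ) − f(aᵢ)g(cbᵢ) (the dual algebra product associated with the comultiplication Δ_r(a) = Σᵢ aᵢa⊗bᵢ − aᵢ⊗abᵢ). Then the linear map φ₁ : L* → L defined by φ₁(f) = −Σᵢ f(aᵢ)·bᵢ is an algebra homomorphism, i.e. φ₁(fg) = φ₁(f)·φ₁(g) for all f, g ∈ L*. -/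

import Mathlib

/-! Apply `f ⊗ g ⊗ id` to the Yang–Baxter element. The first two of its three terms contract
to `-φ₁(fg)` (after exchanging the summation indices), and the third to
`∑ i j, f(aᵢ) g(aⱼ) bᵢbⱼ = φ₁(f) φ₁(g)`, so the CYBE says exactly `φ₁(fg) = φ₁(f) φ₁(g)`. -/

open TensorProduct

/-- The classical Yang–Baxter equation for `r = ∑ i, a i ⊗ b i`. -/
def CYBE {F L : Type*} [Field F] [AddCommGroup L] [Module F L]
    (mul : L →ₗ[F] L →ₗ[F] L) {n : ℕ} (a b : Fin n → L) : Prop :=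
  ∑ i : Fin n, ∑ j : Fin n,
      (mul (a i) (a j) ⊗ₜ[F] (b i ⊗ₜ[F] b j)
        - a i ⊗ₜ[F] (mul (a j) (b i) ⊗ₜ[F] b j)
        + a i ⊗ₜ[F] (a j ⊗ₜ[F] mul (b i) (b j))) = 0

section

variable {R M : Type*} [CommRing R] [AddCommGroup M] [Module R M]

def Module.Dual.contractTwo (f g : Module.Dual R M) : M ⊗[R] (M ⊗[R] M) →ₗ[R] M :=
  TensorProduct.lift (f.smulRight (TensorProduct.lift (g.smulRight LinearMap.id)))

@[simp]
theorem Module.Dual.contractTwo_tmul (f g : Module.Dual R M) (x y z : M) :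
    f.contractTwo g (x ⊗ₜ (y ⊗ₜ z)) = (f x * g y) • z := by
  simp [Module.Dual.contractTwo, smul_smul]

end

theorem CYBE.sum_contractTwo {F L : Type*} [Field F] [AddCommGroup L] [Module F L]
    {mul : L →ₗ[F] L →ₗ[F] L} {n : ℕ} {a b : Fin n → L} (h : CYBE mul a b)
    (f g : Module.Dual F L) :
    ∑ i, ∑ j, (f (mul (a i) (a j)) * g (b i) - f (a i) * g (mul (a j) (b i))) • b j
      = -∑ i, ∑ j, (f (a i) * g (a j)) • mul (b i) (b j) := by
  rw [eq_neg_iff_add_eq_zero, ← Finset.sum_add_distrib]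
  simp_rw [← Finset.sum_add_distrib]
  simpa [sub_smul] using congrArg (f.contractTwo g) h

theorem stmt17_general {F L : Type*} [Field F] [AddCommGroup L] [Module F L]
    (mul : L →ₗ[F] L →ₗ[F] L)
    -- `r = ∑ i, a i ⊗ b i` is a solution of the CYBE
    {n : ℕ} (a b : Fin n → L) (hcybe : CYBE mul a b) :
    -- `φ₁(f) = -∑ i, f(aᵢ) • bᵢ` is a homomorphism from the dual algebra
    -- `(fg)(c) = ∑ i, f(aᵢc)g(bᵢ) - f(aᵢ)g(cbᵢ)` to `L`
    ∀ f g : Module.Dual F L,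
      -∑ i, (∑ j, (f (mul (a j) (a i)) * g (b j) - f (a j) * g (mul (a i) (b j)))) • b i
        = mul (-∑ i, f (a i) • b i) (-∑ j, g (a j) • b j) := by
  intro f g
  simp only [Finset.sum_smul]
  rw [Finset.sum_comm, hcybe.sum_contractTwo f g]
  simp [Finset.smul_sum, smul_smul]

theorem stmt17 {F L : Type*} [Field F] [CharZero F] [AddCommGroup L] [Module F L]
    [FiniteDimensional F L] (mul : L →ₗ[F] L →ₗ[F] L)
    -- `L` is anticommutative
    (hanti : ∀ v : L, mul v v = 0)
    -- `r = ∑ i, a i ⊗ b i` is a solution of the CYBE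
    {n : ℕ} (a b : Fin n → L) (hcybe : CYBE mul a b) :
    -- `φ₁(f) = -∑ i, f(aᵢ) • bᵢ` is a homomorphism from the dual algebra
    -- `(fg)(c) = ∑ i, f(aᵢc)g(bᵢ) - f(aᵢ)g(cbᵢ)` to `L`
    ∀ f g : Module.Dual F L,
      -∑ i, (∑ j, (f (mul (a j) (a i)) * g (b j) - f (a j) * g (mul (a i) (b j)))) • b i
        = mul (-∑ i, f (a i) • b i) (-∑ j, g (a j) • b j) :=
  stmt17_general mul a b hcybe
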